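/- Let d ≥ 2 and let π be a probability measure on ℝ^d with an everywhere strictly positive density ρ with respect to Lebesgue measure, such that the score s := ∇ log ρ exists Lebesgue-almost everywhere and satisfies ∫ ‖s(x)‖² dπ(x) < ∞. Then for every ε_score > 0 and every ε_TV > 0 there exist a unit vector u ∈ ℝ^d, an angle θ ∈ (0, π/2), and a closed ball K' of positive radius contained in the interior of Cone_{θ,u}, such that the score estimate ŝ : ℝ^d → ℝ^d defined by ŝ(x) = u for x ∈ K' and ŝ(x) = s(x) for x ∉ K' satisfies: (1) ∫ ‖ŝ(x) − s(x)‖² dπ(x) ≤ ε_score², and (2) 0 < π(Cone_{θ,u}) ≤ ε_TV and π(Cone_{θ,u}) < 1. -/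

import Mathlib

open MeasureTheory
open scoped Classical

/-- For `θ ∈ (0, π/2)` and a unit vector `u ∈ ℝ^d`,
`Cone_{θ,u} := {y ≠ 0 : ⟨y, u⟩ ≥ ‖y‖ cos θ}`. -/
def cone {d : ℕ} (θ : ℝ) (u : EuclideanSpace ℝ (Fin d)) : Set (EuclideanSpace ℝ (Fin d)) :=
  {y | y ≠ 0 ∧ ‖y‖ * Real.cos θ ≤ (inner ℝ y u : ℝ)}

/-!
Since `d ≥ 2`, the line `ℝ u` is Lebesgue-null, and the cones `Cone_{θ,u}` shrink into it as
`θ → 0`; so their `π`-mass tends to `0`, while it stays positive because `ρ > 0` and `u` is an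
interior point of every cone with `θ > 0`. Replacing the score by `u` on a closed ball `B`
around `u` costs `∫_B ‖u - s‖² dπ` in squared `L²` error, which tends to `0` as the ball shrinks
to the `π`-null point `u`, by absolute continuity of the integral of the integrable `‖u - s‖²`.
-/

open Filter Topology Set Real

lemma aemeasurable_of_ae_continuousAt {α β : Type*} [MeasurableSpace α] [TopologicalSpace α]
    [OpensMeasurableSpace α] [PseudoEMetricSpace β] [MeasurableSpace β] [BorelSpace β]
    {μ : Measure α} {f : α → β} (h : ∀ᵐ x ∂μ, ContinuousAt f x) : AEMeasurable f μ := by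
  rw [← Measure.restrict_eq_self_of_ae_mem h]
  exact ContinuousOn.aemeasurable (fun x (hx : ContinuousAt f x) => hx.continuousWithinAt)
    (measurableSet_of_continuousAt f)

section Gradient

variable {F : Type*} [NormedAddCommGroup F] [InnerProductSpace ℝ F] [CompleteSpace F]
  [MeasurableSpace F] [BorelSpace F]

lemma measurable_gradient (f : F → ℝ) : Measurable (gradient f) :=
  (InnerProductSpace.toDual ℝ F).symm.continuous.measurable.comp (measurable_fderiv ℝ f)

lemma aemeasurable_of_ae_hasGradientAt {μ : Measure F} {f : F → ℝ} {g : F → F}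
    (h : ∀ᵐ x ∂μ, HasGradientAt f (g x) x) : AEMeasurable g μ :=
  ⟨gradient f, measurable_gradient f, h.mono fun _ hx => hx.gradient.symm⟩

end Gradient

lemma isOpenPosMeasure_withDensity_ofReal {α : Type*} [MeasurableSpace α] [TopologicalSpace α]
    {μ : Measure α} [μ.IsOpenPosMeasure] {ρ : α → ℝ} (hρm : AEMeasurable ρ μ)
    (hρ : ∀ x, 0 < ρ x) : (μ.withDensity fun x => ENNReal.ofReal (ρ x)).IsOpenPosMeasure :=
  (withDensity_absolutelyContinuous' hρm.ennreal_ofReal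
    (.of_forall fun x => ENNReal.ofReal_pos.2 (hρ x) |>.ne')).isOpenPosMeasure

lemma addHaar_span_singleton {E : Type*} [NormedAddCommGroup E] [NormedSpace ℝ E]
    [MeasurableSpace E] [BorelSpace E] [FiniteDimensional ℝ E] (μ : Measure E) [μ.IsAddHaarMeasure]
    (hE : 2 ≤ Module.finrank ℝ E) (u : E) : μ (Submodule.span ℝ {u}) = 0 := by
  refine Measure.addHaar_submodule μ _ fun htop => ?_
  have := finrank_span_le_card (R := ℝ) ({u} : Set E)
  rw [htop, finrank_top, Set.toFinset_singleton, Finset.card_singleton] at this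
  omega

lemma integral_norm_ite_sub_sq {α E : Type*} [MeasurableSpace α] [NormedAddCommGroup E]
    {μ : Measure α} {B : Set α} (hB : MeasurableSet B) (u : E) (s : α → E) :
    ∫ x, ‖(if x ∈ B then u else s x) - s x‖ ^ 2 ∂μ = ∫ x in B, ‖u - s x‖ ^ 2 ∂μ := by
  rw [← integral_indicator hB]
  congr 1 with x
  by_cases hx : x ∈ B <;> simp [hx]

lemma tendsto_measure_closedBall_nhdsGT {α : Type*} [MetricSpace α] [MeasurableSpace α]
    [OpensMeasurableSpace α] (μ : Measure α) [IsFiniteMeasure μ] (c : α) :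
    Tendsto (fun r => μ (Metric.closedBall c r)) (𝓝[>] 0) (𝓝 (μ {c})) := by
  refine ((tendsto_measure_cthickening_of_isClosed ⟨1, one_pos, measure_ne_top μ _⟩
    isClosed_singleton).mono_left nhdsWithin_le_nhds).congr' ?_
  filter_upwards [self_mem_nhdsWithin] with r (hr : 0 < r)
  rw [Metric.cthickening_singleton c hr.le]

lemma exists_setIntegral_closedBall_lt {α : Type*} [MetricSpace α] [MeasurableSpace α]
    [OpensMeasurableSpace α] {μ : Measure α} [IsFiniteMeasure μ] {c : α} (hc : μ {c} = 0)
    {g : α → ℝ} (hg : Integrable g μ) {ε R : ℝ} (hε : 0 < ε) (hR : 0 < R) :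
    ∃ r ∈ Ioc 0 R, ∫ x in Metric.closedBall c r, g x ∂μ < ε := by
  have hlim := hg.tendsto_setIntegral_nhds_zero (hc ▸ tendsto_measure_closedBall_nhdsGT μ c)
  have hsmall : ∀ᶠ r in 𝓝[>] (0 : ℝ), r ∈ Ioc 0 R := Ioc_mem_nhdsGT hR
  exact (hsmall.and (hlim.eventually (gt_mem_nhds hε))).exists

section Cone

variable {d : ℕ} {θ θ' : ℝ} {u : EuclideanSpace ℝ (Fin d)}

lemma cone_subset_cone (hθ' : 0 ≤ θ') (hθ'θ : θ' ≤ θ) (hθ : θ ≤ π) : cone θ' u ⊆ cone θ u :=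
  fun y ⟨hy0, hy⟩ => ⟨hy0, le_trans (mul_le_mul_of_nonneg_left
    (cos_le_cos_of_nonneg_of_le_pi hθ' hθ hθ'θ) (norm_nonneg y)) hy⟩

lemma measurableSet_cone : MeasurableSet (cone θ u) := by
  have hclosed : IsClosed {y : EuclideanSpace ℝ (Fin d) | ‖y‖ * cos θ ≤ inner ℝ y u} :=
    isClosed_le (by fun_prop) (by fun_prop)
  exact (measurableSet_singleton 0).compl.inter hclosed.measurableSet

lemma mem_interior_cone_self (hu : ‖u‖ = 1) (hθ : 0 < θ) (hθπ : θ ≤ π) :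
    u ∈ interior (cone θ u) := by
  have hopen : IsOpen {y : EuclideanSpace ℝ (Fin d) | ‖y‖ * cos θ < inner ℝ y u} :=
    isOpen_lt (by fun_prop) (by fun_prop)
  have hsub : {y | ‖y‖ * cos θ < inner ℝ y u} ⊆ cone θ u := by
    intro y (hy : ‖y‖ * cos θ < inner ℝ y u)
    refine ⟨?_, hy.le⟩
    rintro rfl
    simp at hy
  refine interior_maximal hsub hopen ?_
  show ‖u‖ * cos θ < inner ℝ u u
  rw [real_inner_self_eq_norm_sq, hu, one_mul, one_pow]
  simpa using cos_lt_cos_of_nonneg_of_le_pi le_rfl hθπ hθ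

lemma iInter_cone_subset_span (hu : ‖u‖ = 1) {θ : ℕ → ℝ} (hθ : Tendsto θ atTop (𝓝 0)) :
    ⋂ n, cone (θ n) u ⊆ Submodule.span ℝ {u} := by
  intro y hy
  simp only [mem_iInter] at hy
  have hcos : Tendsto (fun n => ‖y‖ * cos (θ n)) atTop (𝓝 ‖y‖) := by
    simpa using ((continuous_cos.tendsto 0).comp hθ).const_mul ‖y‖
  have hle : ‖y‖ ≤ inner ℝ y u := le_of_tendsto hcos (.of_forall fun n => (hy n).2)
  have heq : inner ℝ y u = ‖y‖ * ‖u‖ := by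
    rw [hu, mul_one]
    exact le_antisymm (by simpa [hu] using real_inner_le_norm y u) hle
  have hy : ‖u‖ • y = ‖y‖ • u := inner_eq_norm_mul_iff_real.mp heq
  rw [hu, one_smul] at hy
  exact hy ▸ Submodule.smul_mem _ _ (Submodule.mem_span_singleton_self u)

lemma exists_measure_cone_lt (hd : 2 ≤ d) (μ : Measure (EuclideanSpace ℝ (Fin d)))
    [IsFiniteMeasure μ] (hμ : μ ≪ volume) (hu : ‖u‖ = 1) {δ : ENNReal} (hδ : 0 < δ) :
    ∃ θ ∈ Ioo 0 (π / 2), μ (cone θ u) < δ := by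
  set θ : ℕ → ℝ := fun n => 1 / (n + 1)
  have hθ_pos : ∀ n, 0 < θ n := fun n => by positivity
  have hθ_le_one : ∀ n, θ n ≤ 1 := fun n =>
    div_le_one_of_le₀ (by linarith [n.cast_nonneg (α := ℝ)]) (by positivity)
  have hθ_anti : Antitone θ := fun m n hmn =>
    one_div_le_one_div_of_le (by positivity) (by gcongr)
  have hnull : μ (⋂ n, cone (θ n) u) = 0 :=
    measure_mono_null (iInter_cone_subset_span hu tendsto_one_div_add_atTop_nhds_zero_nat)
      (hμ (addHaar_span_singleton volume (by simpa using hd) u))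
  have hlim : Tendsto (fun n => μ (cone (θ n) u)) atTop (𝓝 0) :=
    hnull ▸ tendsto_measure_iInter_atTop (fun n => measurableSet_cone.nullMeasurableSet)
      (fun m n hmn => cone_subset_cone (hθ_pos n).le (hθ_anti hmn)
        (by linarith [hθ_le_one m, pi_gt_three]))
      ⟨0, measure_ne_top μ _⟩
  obtain ⟨n, hn⟩ := (hlim.eventually (gt_mem_nhds hδ)).exists
  exact ⟨θ n, ⟨hθ_pos n, by linarith [hθ_le_one n, pi_gt_three]⟩, hn⟩

end Cone

/-- for any target with everywhere positive density and square-integrable score,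
one can corrupt the score on a small closed ball inside a thin cone so that the `L²` score error
is at most `ε_score`, while the cone has small but positive target mass. -/
theorem stmt8 (d : ℕ) (hd : 2 ≤ d)
    (ρ : EuclideanSpace ℝ (Fin d) → ℝ) (hρ : ∀ x, 0 < ρ x)
    (μ : Measure (EuclideanSpace ℝ (Fin d)))
    (hμ : μ = volume.withDensity fun x => ENNReal.ofReal (ρ x))
    (hprob : IsProbabilityMeasure μ)
    (s : EuclideanSpace ℝ (Fin d) → EuclideanSpace ℝ (Fin d))
    (hs : ∀ᵐ x ∂(volume : Measure (EuclideanSpace ℝ (Fin d))),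
      HasGradientAt (fun y => Real.log (ρ y)) (s x) x)
    (hs2 : Integrable (fun x => ‖s x‖ ^ 2) μ)
    (εscore εTV : ℝ) (hεscore : 0 < εscore) (hεTV : 0 < εTV) :
    ∃ u : EuclideanSpace ℝ (Fin d), ‖u‖ = 1 ∧
    ∃ θ ∈ Set.Ioo (0 : ℝ) (Real.pi / 2),
    ∃ (c : EuclideanSpace ℝ (Fin d)) (r : ℝ), 0 < r ∧
      Metric.closedBall c r ⊆ interior (cone θ u) ∧
      (∫ x, ‖(if x ∈ Metric.closedBall c r then u else s x) - s x‖ ^ 2 ∂μ) ≤ εscore ^ 2 ∧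
      0 < μ (cone θ u) ∧ μ (cone θ u) ≤ ENNReal.ofReal εTV ∧ μ (cone θ u) < 1 := by
  set u : EuclideanSpace ℝ (Fin d) := EuclideanSpace.single ⟨0, by omega⟩ 1
  have hu : ‖u‖ = 1 := by simp [u]
  have hac : μ ≪ volume := hμ ▸ withDensity_absolutelyContinuous _ _
  have hρm : AEMeasurable ρ volume := by
    have hlog : AEMeasurable (fun x => log (ρ x)) volume :=
      aemeasurable_of_ae_continuousAt (hs.mono fun x hx => hx.differentiableAt.continuousAt)
    exact hlog.exp.congr (.of_forall fun x => exp_log (hρ x))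
  have : μ.IsOpenPosMeasure := hμ ▸ isOpenPosMeasure_withDensity_ofReal hρm hρ
  have hsL2 : MemLp s 2 μ := (memLp_two_iff_integrable_sq_norm
    ((aemeasurable_of_ae_hasGradientAt hs).mono_ac hac).aestronglyMeasurable).2 hs2
  have herr : Integrable (fun x => ‖u - s x‖ ^ 2) μ :=
    have hL2 : MemLp (fun x => u - s x) 2 μ := (memLp_const u).sub hsL2
    (memLp_two_iff_integrable_sq_norm hL2.1).1 hL2
  obtain ⟨θ, hθ, hθμ⟩ :=
    exists_measure_cone_lt hd μ hac hu (lt_min one_pos (ENNReal.ofReal_pos.2 hεTV))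
  have hu_int := mem_interior_cone_self hu hθ.1 (by linarith [hθ.2, pi_pos])
  obtain ⟨R, hR, hRsub⟩ :=
    Metric.nhds_basis_closedBall.mem_iff.1 (isOpen_interior.mem_nhds hu_int)
  have hu_null : μ {u} = 0 := hac (measure_mono_null (Submodule.subset_span (R := ℝ))
    (addHaar_span_singleton volume (by simpa using hd) u))
  obtain ⟨r, ⟨hr, hrR⟩, hrε⟩ :=
    exists_setIntegral_closedBall_lt hu_null herr (pow_pos hεscore 2) hR
  refine ⟨u, hu, θ, hθ, u, r, hr, (Metric.closedBall_subset_closedBall hrR).trans hRsub, ?_,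
    Measure.measure_pos_of_nonempty_interior μ ⟨u, hu_int⟩, (hθμ.trans_le (min_le_right _ _)).le,
    hθμ.trans_le (min_le_left _ _)⟩
  rw [integral_norm_ite_sub_sq measurableSet_closedBall]
  exact hrε.le
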